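/- Let C ⊆ F^n be a perfect binary code containing the all-zero vector, let λ : C → ZMod 2 be any map, and let C' = {(x + y, |x| + λ(y), x) : x ∈ F^n, y ∈ C} ⊆ F^{2n+1} be the corresponding Vasil'ev code. Then rank(C) + n ≤ rank(C') ≤ rank(C) + n + 1. -/

import Mathlib

open Finset

/-- The binary vector space `F^n`. -/
abbrev F (n : ℕ) : Type := Fin n → ZMod 2

/-- Action of a coordinate permutation: `(π x) i = x (π⁻¹ i)`. -/
def permAct {n : ℕ} (π : Equiv.Perm (Fin n)) (x : F n) : F n := fun i => x (π⁻¹ i)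

/-- `(v, π)` is an isometry fixing the code `C` set-wise. -/
def IsIsoPair {n : ℕ} (C : Set (F n)) (v : F n) (π : Equiv.Perm (Fin n)) : Prop :=
  (fun x => v + permAct π x) '' C = C

/-- `C` is a single-error-correcting perfect binary code. -/
def IsPerfectCode {n : ℕ} (C : Set (F n)) : Prop :=
  ∀ x : F n, ∃! y : F n, y ∈ C ∧ hammingDist x y ≤ 1

/-- `P` is a propelinear structure on the code `C`. -/
def IsPropStructure {n : ℕ} (C : Set (F n)) (P : F n → Equiv.Perm (Fin n)) : Prop :=
  (∀ x ∈ C, IsIsoPair C x (P x)) ∧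
  (∀ x ∈ C, ∀ y ∈ C, P (x + permAct (P x) y) = P x * P y)

/-- `C` admits a propelinear structure. -/
def IsPropelinear {n : ℕ} (C : Set (F n)) : Prop :=
  ∃ P : F n → Equiv.Perm (Fin n), IsPropStructure C P

/-- The rank of a code: dimension of its linear span over GF(2). -/
noncomputable def codeRank {n : ℕ} (C : Set (F n)) : ℕ :=
  Module.finrank (ZMod 2) (Submodule.span (ZMod 2) C)

/-- The kernel of a code `C`: codewords whose translate fixes `C`. -/
def codeKernel {n : ℕ} (C : Set (F n)) : Set (F n) :=
  {x ∈ C | (fun c => x + c) '' C = C}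

/-- A propelinear structure is normalized if codewords in the same coset
of the kernel get the same permutation. -/
def IsNormalized {n : ℕ} (C : Set (F n)) (P : F n → Equiv.Perm (Fin n)) : Prop :=
  ∀ x ∈ C, ∀ y ∈ C, x + y ∈ codeKernel C → P x = P y

/-- A code is transitive if its automorphism group acts transitively on it. -/
def IsTransitive {n : ℕ} (C : Set (F n)) : Prop :=
  ∀ x ∈ C, ∀ y ∈ C, ∃ v π, IsIsoPair C v π ∧ v + permAct π x = y

/-- The (ZMod 2) weight parity `|x| = Σ_i x_i`. -/
def wt {n : ℕ} (x : F n) : ZMod 2 := ∑ i, x i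

/-- Assemble a vector of `F^(2n+1)` from a first block of `n` coordinates,
a middle coordinate and a last block of `n` coordinates. -/
def vasVec {n : ℕ} (a : F n) (b : ZMod 2) (c : F n) : F (2 * n + 1) :=
  fun i =>
    if h : (i : ℕ) < n then a ⟨i, h⟩
    else if h' : (i : ℕ) = n then b
    else c ⟨(i : ℕ) - (n + 1), by have := i.isLt; omega⟩

/-- The Vasil'ev code of `C` with function `lam`. -/
def vasCode {n : ℕ} (C : Set (F n)) (lam : F n → ZMod 2) : Set (F (2 * n + 1)) :=
  {w | ∃ x : F n, ∃ y ∈ C, w = vasVec (x + y) (wt x + lam y) x}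

/-- Assemble a vector of `F^(tm+t+m)` from blocks of `tm`, `t` and `m` coordinates. -/
def mollVec {t m : ℕ} (x : F (t * m)) (b : F t) (c : F m) : F (t * m + t + m) :=
  fun i =>
    if h : (i : ℕ) < t * m then x ⟨i, h⟩
    else if h' : (i : ℕ) < t * m + t then b ⟨(i : ℕ) - t * m, by omega⟩
    else c ⟨(i : ℕ) - (t * m + t), by have := i.isLt; omega⟩

/-- First generalized parity-check function: `p1(x)_i = Σ_j x_{ij}`. -/
def p1 {t m : ℕ} (x : F (t * m)) : F t := fun i => ∑ j : Fin m, x (finProdFinEquiv (i, j))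

/-- Second generalized parity-check function: `p2(x)_j = Σ_i x_{ij}`. -/
def p2 {t m : ℕ} (x : F (t * m)) : F m := fun j => ∑ i : Fin t, x (finProdFinEquiv (i, j))

/-- The Mollard code of `Ct` and `Cm` with function `f`. -/
def mollCode {t m : ℕ} (Ct : Set (F t)) (Cm : Set (F m)) (f : F t → F m) :
    Set (F (t * m + t + m)) :=
  {w | ∃ x : F (t * m), ∃ y ∈ Ct, ∃ z ∈ Cm, w = mollVec x (y + p1 x) (z + p2 x + f y)}

/-!
The Vasil'ev code is sandwiched between two linear images. The linear map
`(x, y, t) ↦ (x + y, |x| + t, x)` maps `F^n × C × F_2` to a set containing `C'`, and the linear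
map `w ↦ (last block, first block + last block)` sends `C'` onto `F^n × C`. Both maps can only
lower the rank, and since `0 ∈ C` the span of a product of such sets is the product of their
spans, of dimension `n + rank C + 1` and `n + rank C` respectively.
-/

section SpanRank

variable {K M N : Type*} [Field K] [AddCommGroup M] [AddCommGroup N] [Module K M] [Module K N]

theorem finrank_span_univ :
    Module.finrank K (Submodule.span K (Set.univ : Set M)) = Module.finrank K M := by
  rw [Submodule.span_univ, finrank_top]

variable [FiniteDimensional K M] [FiniteDimensional K N]

theorem Submodule.finrank_prod (p : Submodule K M) (q : Submodule K N) :
    Module.finrank K (p.prod q) = Module.finrank K p + Module.finrank K q := by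
  rw [← p.range_subtype, ← q.range_subtype, ← LinearMap.range_prodMap,
    LinearMap.finrank_range_of_inj
      (Prod.map_injective.mpr ⟨p.injective_subtype, q.injective_subtype⟩),
    Module.finrank_prod, p.range_subtype, q.range_subtype]

theorem finrank_span_prod {s : Set M} {t : Set N} (hs : 0 ∈ s) (ht : 0 ∈ t) :
    Module.finrank K (Submodule.span K (s ×ˢ t)) =
      Module.finrank K (Submodule.span K s) + Module.finrank K (Submodule.span K t) := by
  rw [Submodule.span_prod_eq K hs ht, Submodule.finrank_prod]

theorem finrank_span_le_of_subset_image (f : M →ₗ[K] N) {s : Set N} {t : Set M}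
    (h : s ⊆ f '' t) :
    Module.finrank K (Submodule.span K s) ≤ Module.finrank K (Submodule.span K t) :=
  calc Module.finrank K (Submodule.span K s)
      ≤ Module.finrank K (Submodule.span K (f '' t)) :=
        Submodule.finrank_mono (Submodule.span_mono h)
    _ ≤ Module.finrank K (Submodule.span K t) := by
      rw [Submodule.span_image]
      exact Submodule.finrank_map_le f _

end SpanRank

section Vasilev

variable {n : ℕ}

theorem wt_add (x y : F n) : wt (x + y) = wt x + wt y := by
  simp only [wt, Pi.add_apply, Finset.sum_add_distrib]

theorem wt_smul (r : ZMod 2) (x : F n) : wt (r • x) = r * wt x := by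
  simp only [wt, Pi.smul_apply, smul_eq_mul, Finset.mul_sum]

theorem vasVec_add (a a' c c' : F n) (b b' : ZMod 2) :
    vasVec (a + a') (b + b') (c + c') = vasVec a b c + vasVec a' b' c' := by
  funext i
  simp only [vasVec, Pi.add_apply]
  split_ifs <;> rfl

theorem vasVec_smul (r : ZMod 2) (a c : F n) (b : ZMod 2) :
    vasVec (r • a) (r * b) (r • c) = r • vasVec a b c := by
  funext i
  simp only [vasVec, Pi.smul_apply, smul_eq_mul]
  split_ifs <;> rfl

theorem vasVec_apply_left (a c : F n) (b : ZMod 2) (i : Fin n) :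
    vasVec a b c ⟨i, by omega⟩ = a i := by
  simp [vasVec]

theorem vasVec_apply_right (a c : F n) (b : ZMod 2) (j : Fin n) :
    vasVec a b c ⟨n + 1 + j, by omega⟩ = c j := by
  have hlt : ¬ (n + 1 + (j : ℕ) < n) := by omega
  have hne : n + 1 + (j : ℕ) ≠ n := by omega
  simp [vasVec, hlt, hne]

def vasParam (n : ℕ) : F n × F n × ZMod 2 →ₗ[ZMod 2] F (2 * n + 1) where
  toFun p := vasVec (p.1 + p.2.1) (wt p.1 + p.2.2) p.1
  map_add' p q := by
    simp only [Prod.fst_add, Prod.snd_add, wt_add, ← vasVec_add]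
    congr 1 <;> abel
  map_smul' r p := by
    simp only [Prod.smul_fst, Prod.smul_snd, wt_smul, smul_add, ← vasVec_smul, smul_eq_mul,
      mul_add, RingHom.id_apply]

def vasCoords (n : ℕ) : F (2 * n + 1) →ₗ[ZMod 2] F n × F n where
  toFun w :=
    (fun j => w ⟨n + 1 + j, by omega⟩, fun i => w ⟨i, by omega⟩ + w ⟨n + 1 + i, by omega⟩)
  map_add' _ _ := by ext <;> simp [add_add_add_comm]
  map_smul' _ _ := by ext <;> simp [mul_add]

theorem vasCoords_vasVec (x y : F n) (b : ZMod 2) : vasCoords n (vasVec (x + y) b x) = (x, y) := by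
  ext i
  · exact vasVec_apply_right _ _ _ i
  · simp only [vasCoords, LinearMap.coe_mk, AddHom.coe_mk, vasVec_apply_left, vasVec_apply_right,
      Pi.add_apply]
    rw [add_comm (x i), CharTwo.add_cancel_right]

theorem vasCode_subset_image_vasParam (C : Set (F n)) (lam : F n → ZMod 2) :
    vasCode C lam ⊆ vasParam n '' (Set.univ ×ˢ (C ×ˢ Set.univ)) := by
  rintro _ ⟨x, y, hy, rfl⟩
  exact ⟨(x, y, lam y), ⟨trivial, hy, trivial⟩, rfl⟩

theorem univ_prod_subset_image_vasCoords (C : Set (F n)) (lam : F n → ZMod 2) :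
    Set.univ ×ˢ C ⊆ vasCoords n '' vasCode C lam := by
  rintro ⟨x, y⟩ ⟨-, hy⟩
  exact ⟨_, ⟨x, y, hy, rfl⟩, vasCoords_vasVec x y _⟩

end Vasilev

theorem vasilev_rank_bounds_general {n : ℕ} (C : Set (F n))
    (h0 : (0 : F n) ∈ C) (lam : F n → ZMod 2) :
    codeRank C + n ≤ codeRank (vasCode C lam) ∧
      codeRank (vasCode C lam) ≤ codeRank C + n + 1 := by
  constructor
  · calc codeRank C + n = Module.finrank (ZMod 2) (Submodule.span (ZMod 2) (Set.univ ×ˢ C)) := by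
          rw [finrank_span_prod (Set.mem_univ 0) h0, finrank_span_univ, Module.finrank_fin_fun,
            add_comm]
          rfl
      _ ≤ codeRank (vasCode C lam) :=
          finrank_span_le_of_subset_image _ (univ_prod_subset_image_vasCoords C lam)
  · calc codeRank (vasCode C lam)
        ≤ Module.finrank (ZMod 2) (Submodule.span (ZMod 2) (Set.univ ×ˢ (C ×ˢ Set.univ))) :=
          finrank_span_le_of_subset_image _ (vasCode_subset_image_vasParam C lam)
      _ = codeRank C + n + 1 := by
          rw [finrank_span_prod (Set.mem_univ 0) (Set.mk_mem_prod h0 (Set.mem_univ 0)),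
            finrank_span_prod h0 (Set.mem_univ 0), finrank_span_univ, finrank_span_univ,
            Module.finrank_fin_fun, Module.finrank_self]
          unfold codeRank
          omega

/-- Bounds on the rank of a Vasil'ev code:
`rank(C) + n ≤ rank(C') ≤ rank(C) + n + 1`. -/
theorem vasilev_rank_bounds {n : ℕ} (C : Set (F n))
    (hC : IsPerfectCode C) (h0 : (0 : F n) ∈ C) (lam : F n → ZMod 2) :
    codeRank C + n ≤ codeRank (vasCode C lam) ∧
      codeRank (vasCode C lam) ≤ codeRank C + n + 1 :=
  vasilev_rank_bounds_general C h0 lam
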